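/- arXiv:1507.02323 — 2 statements merged into one kernel-verified Lean document; each statement's English description precedes it below -/
import Mathlib

section
/- Let $X$ be a binomial random variable with parameters $m$ and $p = \alpha \log(m)/m$, and $W$ an independent binomial random variable with parameters $m$ and $q = \beta \log(m)/m$, where $\alpha > \beta > 0$ are constants with $\sqrt{\alpha} - \sqrt{\beta} > 1$. Then there exists $\epsilon > 0$ such that for all sufficiently large $m$, $\mathbb{P}(X - W \leq \epsilon \log m) \leq m^{-1-\epsilon}$. -/
open Finset Real

/-- The probability mass function of a binomial random variable with
parameters `m` and `p`, evaluated at `j`. -/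
noncomputable def binomPMF (m : ℕ) (p : ℝ) (j : ℕ) : ℝ :=
  (m.choose j : ℝ) * p ^ j * (1 - p) ^ (m - j)

/-!
Chernoff bound for `X - W` with the exponential weight `exp (t (W - X))`: by independence the
bound factors into the two binomial moment generating functions, and with `1 + x ≤ eˣ` it becomes
`m^(t ε + α (e^{-t} - 1) + β (e^t - 1))`. At the optimal `t = log (√α / √β)` the exponent
is `t ε - (√α - √β)²`, which is `-(1 + ε)` for small `ε > 0` exactly when `√α - √β > 1`.
-/

lemma binomPMF_nonneg {m j : ℕ} {p : ℝ} (h0 : 0 ≤ p) (h1 : p ≤ 1) : 0 ≤ binomPMF m p j := by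
  unfold binomPMF
  have : 0 ≤ 1 - p := by linarith
  positivity

lemma sum_binomPMF_mul_exp (m : ℕ) (p c : ℝ) :
    ∑ j ∈ range (m + 1), binomPMF m p j * exp (c * j) = (p * exp c + (1 - p)) ^ m := by
  rw [add_pow]
  refine sum_congr rfl fun j _ => ?_
  rw [binomPMF, mul_comm c, exp_nat_mul, mul_pow]
  ring

lemma sum_binomPMF_mul_exp_le {p : ℝ} (m : ℕ) (c : ℝ) (h0 : 0 ≤ p) (h1 : p ≤ 1) :
    ∑ j ∈ range (m + 1), binomPMF m p j * exp (c * j) ≤ exp (m * p * (exp c - 1)) := by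
  rw [sum_binomPMF_mul_exp, mul_assoc, exp_nat_mul]
  refine pow_le_pow_left₀ (by positivity) ?_ m
  linarith [add_one_le_exp (p * (exp c - 1))]

lemma ite_le_exp_mul {y s c t : ℝ} (hc : 0 ≤ c) (ht : 0 ≤ t) :
    (if y ≤ s then c else 0) ≤ exp (t * (s - y)) * c := by
  split_ifs with h
  · exact le_mul_of_one_le_left hc (one_le_exp (mul_nonneg ht (by linarith)))
  · positivity

lemma sum_sum_ite_sub_le_exp {p q : ℝ} (m : ℕ) (s : ℝ) {t : ℝ} (ht : 0 ≤ t)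
    (hp0 : 0 ≤ p) (hp1 : p ≤ 1) (hq0 : 0 ≤ q) (hq1 : q ≤ 1) :
    (∑ x ∈ range (m + 1), ∑ w ∈ range (m + 1),
        if (x : ℝ) - w ≤ s then binomPMF m p x * binomPMF m q w else 0)
      ≤ exp (t * s + m * p * (exp (-t) - 1) + m * q * (exp t - 1)) :=
  calc (∑ x ∈ range (m + 1), ∑ w ∈ range (m + 1),
          if (x : ℝ) - w ≤ s then binomPMF m p x * binomPMF m q w else 0)
      ≤ ∑ x ∈ range (m + 1), ∑ w ∈ range (m + 1),
          exp (t * s) * ((binomPMF m p x * exp (-t * x)) * (binomPMF m q w * exp (t * w))) := by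
        refine sum_le_sum fun x _ => sum_le_sum fun w _ => ?_
        refine (ite_le_exp_mul (mul_nonneg (binomPMF_nonneg hp0 hp1)
          (binomPMF_nonneg hq0 hq1)) ht).trans_eq ?_
        rw [show t * (s - (x - w)) = t * s + -t * x + t * w by ring, exp_add, exp_add]
        ring
    _ = exp (t * s) * ((∑ x ∈ range (m + 1), binomPMF m p x * exp (-t * x)) *
          ∑ w ∈ range (m + 1), binomPMF m q w * exp (t * w)) := by
        rw [sum_mul_sum, mul_sum]
        exact sum_congr rfl fun x _ => (mul_sum _ _ _).symm
    _ ≤ exp (t * s) * (exp (m * p * (exp (-t) - 1)) * exp (m * q * (exp t - 1))) := by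
        gcongr
        · exact sum_nonneg fun w _ => mul_nonneg (binomPMF_nonneg hq0 hq1) (exp_pos _).le
        · exact sum_binomPMF_mul_exp_le m _ hp0 hp1
        · exact sum_binomPMF_mul_exp_le m _ hq0 hq1
    _ = exp (t * s + m * p * (exp (-t) - 1) + m * q * (exp t - 1)) := by
        rw [exp_add, exp_add, mul_assoc (exp (t * s))]

lemma eventually_mul_log_div_le_one (α : ℝ) :
    ∀ᶠ m : ℕ in Filter.atTop, α * log m / m ≤ 1 := by
  have h := ((isLittleO_log_id_atTop.tendsto_div_nhds_zero.comp
    tendsto_natCast_atTop_atTop).const_mul α)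
  simp only [mul_zero] at h
  filter_upwards [h.eventually_le_const one_pos] with m hm
  simpa [mul_div_assoc] using hm

-- `t = log (a / b)` minimizes `a² (e^{-t} - 1) + b² (e^t - 1)`.
lemma sq_mul_exp_neg_log_div_add_sq_mul_exp_log_div {a b : ℝ} (ha : 0 < a) (hb : 0 < b) :
    a ^ 2 * (exp (-log (a / b)) - 1) + b ^ 2 * (exp (log (a / b)) - 1) = -(a - b) ^ 2 := by
  rw [exp_neg, exp_log (div_pos ha hb), inv_div]
  field_simp
  ring

theorem stmt_8_general (α β : ℝ) (hβ : 0 < β)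
    (hthr : Real.sqrt α - Real.sqrt β > 1) :
    ∃ ε > (0 : ℝ), ∃ M : ℕ, ∀ m ≥ M,
      (∑ x ∈ Finset.range (m + 1), ∑ w ∈ Finset.range (m + 1),
          if (x : ℝ) - (w : ℝ) ≤ ε * Real.log m then
            binomPMF m (α * Real.log m / m) x * binomPMF m (β * Real.log m / m) w
          else 0)
        ≤ (m : ℝ) ^ (-(1 + ε)) := by
  set a := √α
  set b := √β
  have hb : 0 < b := sqrt_pos.mpr hβ
  have ha : 0 < a := by linarith
  have hα : 0 < α := sqrt_pos.mp ha
  set L := log (a / b)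
  have hL : 0 < L := log_pos ((one_lt_div hb).mpr (by linarith))
  obtain ⟨ε, hε, hεL⟩ : ∃ ε > 0, ε * (L + 1) = (a - b) ^ 2 - 1 :=
    ⟨_, div_pos (by nlinarith) (by positivity), div_mul_cancel₀ _ (by positivity)⟩
  refine ⟨ε, hε, ?_⟩
  obtain ⟨M, hM⟩ := Filter.eventually_atTop.mp ((eventually_mul_log_div_le_one α).and
    ((eventually_mul_log_div_le_one β).and (Filter.eventually_ge_atTop 1)))
  refine ⟨M, fun m hm => ?_⟩
  obtain ⟨hp1, hq1, hm1⟩ := hM m hm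
  have hm0 : (0 : ℝ) < m := by exact_mod_cast hm1
  have hlog : 0 ≤ log m := log_nonneg (by exact_mod_cast hm1)
  refine (sum_sum_ite_sub_le_exp m _ hL.le (by positivity) hp1 (by positivity) hq1).trans_eq ?_
  have hmp : m * (α * log m / m) = α * log m := by field_simp
  have hmq : m * (β * log m / m) = β * log m := by field_simp
  have hkey := sq_mul_exp_neg_log_div_add_sq_mul_exp_log_div ha hb
  rw [sq_sqrt hα.le, sq_sqrt hβ.le] at hkey
  rw [rpow_def_of_pos hm0, hmp, hmq]
  congr 1
  linear_combination log m * hkey + log m * hεL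

theorem stmt_8 (α β : ℝ) (hβ : 0 < β) (hαβ : β < α)
    (hthr : Real.sqrt α - Real.sqrt β > 1) :
    ∃ ε > (0 : ℝ), ∃ M : ℕ, ∀ m ≥ M,
      (∑ x ∈ Finset.range (m + 1), ∑ w ∈ Finset.range (m + 1),
          if (x : ℝ) - (w : ℝ) ≤ ε * Real.log m then
            binomPMF m (α * Real.log m / m) x * binomPMF m (β * Real.log m / m) w
          else 0)
        ≤ (m : ℝ) ^ (-(1 + ε)) :=
  stmt_8_general α β hβ hthr
end

section
/- Let $A$ be the adjacency matrix of a graph on $n = km$ vertices with partition $P$ into $k$ equal clusters, and let $M^* = D^* + \sum_i x_i^*(R_i + C_i) - A - Z^*$ with $D^*, x_i^*, Z^*$ defined as in the dual certificate construction of the paper. Then for every cluster $P_t$ with indicator vector $v_t$, $M^* v_t = 0$. -/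
/-!
`(M* v_t)_i` is the sum of row `i` of `M*` over the cluster `P_t`, of size `m`. Over it `D*` sums to
`D*[i,i]` or `0`, the rank-one terms to `m x_i + ∑_{j ∈ P_t} x_j` and `A` to `δ_{i → P_t}`, while
`Z*` sums to `0` if `P(i) = P_t` and otherwise to
`δ^{out}_max(i) - δ_{i → P_t} + ∑_{j ∈ P_t} δ^{out}_max(j)/m - μ/m`, because the terms
`δ_{j → P(i)}` add up to `δ_{P_t → P(i)}`, which cancels against the last term of `Z*`.
In both cases the constants of `D*` and `x*` make the total vanish.
-/

open Finset Matrix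

namespace Matrix

variable {ι κ α : Type*}

lemma mulVec_apply_eq_sum_filter [Fintype ι] [NonAssocSemiring α] [DecidableEq κ] {P : ι → κ}
    {t : κ} (N : Matrix ι ι α) {v : ι → α} (hv : ∀ j, v j = if P j = t then 1 else 0) (i : ι) :
    (N *ᵥ v) i = ∑ j ∈ univ.filter (P · = t), N i j := by
  simp only [mulVec, dotProduct, hv, mul_ite, mul_one, mul_zero, sum_filter]

lemma IsDiag.sum_apply [AddCommMonoid α] [DecidableEq ι] {D : Matrix ι ι α} (hD : D.IsDiag)
    (s : Finset ι) (i : ι) : ∑ j ∈ s, D i j = if i ∈ s then D i i else 0 := by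
  rw [← sum_ite_eq s i fun _ => D i i]
  refine sum_congr rfl fun j _ => ?_
  split_ifs with h
  · rw [h]
  · exact hD h

lemma sum_smul_add_transpose_apply [Fintype ι] [NonAssocSemiring α] [DecidableEq ι]
    {R : ι → Matrix ι ι α} (hR : ∀ l a b, R l a b = if a = l then 1 else 0) (x : ι → α)
    (i j : ι) : (∑ l, x l • (R l + (R l)ᵀ)) i j = x i + x j := by
  simp only [sum_apply, smul_apply, add_apply, transpose_apply, hR, smul_eq_mul, mul_add,
    sum_add_distrib, mul_ite, mul_one, mul_zero, sum_ite_eq, mem_univ, if_true]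

end Matrix

section ClusterCertificate

variable {ι κ : Type*} [Fintype ι] [DecidableEq κ] {P : ι → κ}

lemma sum_filter_degree_eq_blockDegree {A : Matrix ι ι ℝ} {δ : ι → κ → ℝ}
    (hδ : ∀ i t, δ i t = ∑ j ∈ univ.filter (P · = t), A i j) {δP : κ → κ → ℝ}
    (hδP : ∀ s t, δP s t = ∑ i ∈ univ.filter (P · = s), ∑ j ∈ univ.filter (P · = t), A i j)
    (s t : κ) : ∑ i ∈ univ.filter (P · = s), δ i t = δP s t := by
  rw [hδP]
  exact sum_congr rfl fun i _ => hδ i t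

variable {m : ℕ} (hP : ∀ t, (univ.filter (P · = t)).card = m) (hm : (m : ℝ) ≠ 0)
include hP hm

lemma sum_filter_dualX_add {x δmax : ι → ℝ} {μ : ℝ}
    (hx : ∀ i, x i = δmax i / m - μ / (2 * (m * m))) (i : ι) (t : κ) :
    ∑ j ∈ univ.filter (P · = t), (x i + x j)
      = δmax i + (∑ j ∈ univ.filter (P · = t), δmax j) / m - μ / m := by
  simp only [sum_add_distrib, sum_const, hP, nsmul_eq_mul, hx, sum_sub_distrib, ← sum_div]
  field_simp
  ring

lemma sum_filter_dualZ_of_ne {δ : ι → κ → ℝ} {δmax : ι → ℝ} {δP : κ → κ → ℝ} {μ : ℝ}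
    (hδP : ∀ s t, ∑ i ∈ univ.filter (P · = s), δ i t = δP s t) {Z : Matrix ι ι ℝ}
    (hZ : ∀ i j, Z i j = if P i = P j then 0 else
        (δmax i - δ i (P j)) / m + (δmax j - δ j (P i)) / m + (δP (P j) (P i) - μ) / (m * m))
    {i : ι} {t : κ} (hit : P i ≠ t) :
    ∑ j ∈ univ.filter (P · = t), Z i j
      = δmax i - δ i t + (∑ j ∈ univ.filter (P · = t), δmax j) / m - μ / m := by
  rw [sum_congr rfl fun j hj => by rw [hZ, (mem_filter.1 hj).2, if_neg hit]]
  simp only [sum_add_distrib, sum_const, hP, nsmul_eq_mul, ← sum_div, sum_sub_distrib, hδP]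
  field_simp
  ring

end ClusterCertificate

theorem stmt_16_general (k m n : ℕ) (hm : 0 < m)
    (A : Matrix (Fin n) (Fin n) ℝ)
    (P : Fin n → Fin k)
    (hP : ∀ t : Fin k, (Finset.univ.filter (fun i => P i = t)).card = m)
    (δ : Fin n → Fin k → ℝ)
    (hδ : ∀ i t, δ i t = ∑ j ∈ Finset.univ.filter (fun j => P j = t), A i j)
    (δin : Fin n → ℝ) (hδin : ∀ i, δin i = δ i (P i))
    (δmax : Fin n → ℝ)
    (δP : Fin k → Fin k → ℝ)
    (hδP : ∀ s t, δP s t = ∑ i ∈ Finset.univ.filter (fun i => P i = s),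
        ∑ j ∈ Finset.univ.filter (fun j => P j = t), A i j)
    (μ : ℝ)
    (Z : Matrix (Fin n) (Fin n) ℝ)
    (hZ : ∀ i j, Z i j = if P i = P j then 0 else
        (δmax i - δ i (P j)) / m + (δmax j - δ j (P i)) / m
          + (δP (P j) (P i) - μ) / (m * m))
    (x : Fin n → ℝ)
    (hx : ∀ i, x i = δmax i / m - μ / (2 * (m * m)))
    (D : Matrix (Fin n) (Fin n) ℝ) (hDdiag : D.IsDiag)
    (hD : ∀ i, D i i = δin i - δmax i
        - (∑ j ∈ Finset.univ.filter (fun j => P j = P i), δmax j / m) + μ / m)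
    (R : Fin n → Matrix (Fin n) (Fin n) ℝ)
    (hR : ∀ i a b, R i a b = if a = i then (1 : ℝ) else 0)
    (M : Matrix (Fin n) (Fin n) ℝ)
    (hM : M = D + (∑ i, x i • (R i + (R i)ᵀ)) - A - Z)
    (v : Fin k → (Fin n → ℝ))
    (hv : ∀ t i, v t i = if P i = t then (1 : ℝ) else 0) :
    ∀ t : Fin k, M.mulVec (v t) = 0 := by
  intro t
  ext i
  have hm' : (m : ℝ) ≠ 0 := by positivity
  have hrow (N : Matrix (Fin n) (Fin n) ℝ) := mulVec_apply_eq_sum_filter N (hv t) i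
  rw [hM, sub_mulVec, sub_mulVec, add_mulVec]
  simp only [Pi.sub_apply, Pi.add_apply, Pi.zero_apply, hrow, hDdiag.sum_apply,
    sum_smul_add_transpose_apply hR, sum_filter_dualX_add hP hm' hx, mem_filter, mem_univ,
    true_and, ← hδ]
  by_cases hit : P i = t
  · have hZ0 : ∑ j ∈ univ.filter (P · = t), Z i j = 0 :=
      sum_eq_zero fun j hj => by rw [hZ, (mem_filter.1 hj).2, if_pos hit]
    rw [if_pos hit, hZ0, hD, hδin, hit, ← sum_div]
    ring
  · have hblock := sum_filter_degree_eq_blockDegree hδ hδP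
    rw [if_neg hit, sum_filter_dualZ_of_ne hP hm' hblock hZ hit]
    ring

theorem stmt_16 (k m n : ℕ) (hk : 2 ≤ k) (hm : 0 < m) (hn : n = k * m)
    (A : Matrix (Fin n) (Fin n) ℝ) (hAsymm : A.IsSymm)
    (hAdiag : ∀ i, A i i = 0) (hA01 : ∀ i j, A i j = 0 ∨ A i j = 1)
    (P : Fin n → Fin k)
    (hP : ∀ t : Fin k, (Finset.univ.filter (fun i => P i = t)).card = m)
    (δ : Fin n → Fin k → ℝ)
    (hδ : ∀ i t, δ i t = ∑ j ∈ Finset.univ.filter (fun j => P j = t), A i j)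
    (δin : Fin n → ℝ) (hδin : ∀ i, δin i = δ i (P i))
    (δmax : Fin n → ℝ)
    (hδmax : ∀ i, IsGreatest {x | ∃ t : Fin k, t ≠ P i ∧ x = δ i t} (δmax i))
    (δP : Fin k → Fin k → ℝ)
    (hδP : ∀ s t, δP s t = ∑ i ∈ Finset.univ.filter (fun i => P i = s),
        ∑ j ∈ Finset.univ.filter (fun j => P j = t), A i j)
    (μ : ℝ)
    (hμ : IsLeast {x | ∃ t₁ t₂ : Fin k, t₁ ≠ t₂ ∧ x = δP t₁ t₂} μ)
    (Z : Matrix (Fin n) (Fin n) ℝ)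
    (hZ : ∀ i j, Z i j = if P i = P j then 0 else
        (δmax i - δ i (P j)) / m + (δmax j - δ j (P i)) / m
          + (δP (P j) (P i) - μ) / (m * m))
    (x : Fin n → ℝ)
    (hx : ∀ i, x i = δmax i / m - μ / (2 * (m * m)))
    (D : Matrix (Fin n) (Fin n) ℝ) (hDdiag : D.IsDiag)
    (hD : ∀ i, D i i = δin i - δmax i
        - (∑ j ∈ Finset.univ.filter (fun j => P j = P i), δmax j / m) + μ / m)
    (R : Fin n → Matrix (Fin n) (Fin n) ℝ)
    (hR : ∀ i a b, R i a b = if a = i then (1 : ℝ) else 0)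
    (M : Matrix (Fin n) (Fin n) ℝ)
    (hM : M = D + (∑ i, x i • (R i + (R i)ᵀ)) - A - Z)
    (v : Fin k → (Fin n → ℝ))
    (hv : ∀ t i, v t i = if P i = t then (1 : ℝ) else 0) :
    ∀ t : Fin k, M.mulVec (v t) = 0 :=
  stmt_16_general k m n hm A P hP δ hδ δin hδin δmax δP hδP μ Z hZ x hx D hDdiag hD R hR M hM v hv
end
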